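/- Assume weak disorder. Let {A_{m,n}}_{m,n≥1} be events on path space (in 𝔽_∞) such that lim_{m→∞} sup_n P(A_{m,n}) = 0. Then lim_{m→∞} sup_n Q[μ_n(A_{m,n})] = 0, and likewise lim_{m→∞} sup_n Q[μ_∞(A_{m,n})] = 0, where for A ∈ 𝔽_∞, μ_∞(A) := lim_{n→∞} μ_n(A) (this limit exists Q-a.s. for each fixed A by martingale convergence of the numerator P[exp(βH_n − nλ(β)) 1_A] and the denominator W_n). -/

import Mathlib

open MeasureTheory ProbabilityTheory Filter

noncomputable section

/-- A directed polymer model in random environment, in transverse dimension `d`: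
an i.i.d. environment `η(n,x)`, `n ≥ 1`, `x ∈ ℤ^d`, on a probability space `(H, Q)`,
with all exponential moments finite, together with the law `P` of the simple random
walk on `ℤ^d` started at the origin (i.i.d. increments, uniform on the `2d` unit
vectors `±e_1, …, ±e_d`). -/
structure PolymerModel (d : ℕ) (H : Type*) [MeasurableSpace H] where
  hd : 1 ≤ d
  /-- the law of the environment -/
  Q : Measure H
  hQprob : IsProbabilityMeasure Q
  /-- the environment variables -/
  η : ℕ → (Fin d → ℤ) → H → ℝ
  hη_meas : ∀ n x, Measurable (η n x)
  /-- the environment variables are independent -/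
  hη_indep : iIndepFun
      (fun p : ℕ × (Fin d → ℤ) => η p.1 p.2) Q
  /-- the environment variables are identically distributed -/
  hη_ident : ∀ n x, Measure.map (η n x) Q = Measure.map (η 1 0) Q
  /-- all exponential moments are finite -/
  hη_exp : ∀ β : ℝ, Integrable (fun h => Real.exp (β * η 1 0 h)) Q
  /-- the law of the simple random walk, as a measure on paths `ℕ → ℤ^d` -/
  P : Measure (ℕ → Fin d → ℤ)
  hPprob : IsProbabilityMeasure P
  hP0 : P {ω | ω 0 = 0} = 1
  /-- the walk has independent increments -/
  hP_indep : iIndepFun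
      (fun (n : ℕ) (ω : ℕ → Fin d → ℤ) => ω (n + 1) - ω n) P
  /-- each increment is uniformly distributed on the `2d` unit vectors -/
  hP_step : ∀ (n : ℕ) (v : Fin d → ℤ), (∑ i, |v i|) = 1 →
      P {ω | ω (n + 1) - ω n = v} = 1 / (2 * d)

namespace PolymerModel

variable {d : ℕ} {H : Type*} [MeasurableSpace H] (M : PolymerModel d H)

/-- `λ(β) = ln Q[exp(β η(n,x))]`. -/
def lam (β : ℝ) : ℝ := Real.log (∫ h, Real.exp (β * M.η 1 0 h) ∂M.Q)

/-- the energy `H_n(ω) = ∑_{t=1}^n η(t, ω_t)` of a path in environment `h`. -/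
def energy (n : ℕ) (ω : ℕ → Fin d → ℤ) (h : H) : ℝ := ∑ t ∈ Finset.Icc 1 n, M.η t (ω t) h

/-- the partition function `Z_n = P[exp (β H_n)]`. -/
def Z (β : ℝ) (n : ℕ) (h : H) : ℝ := ∫ ω, Real.exp (β * M.energy n ω h) ∂M.P

/-- the normalized partition function `W_n = Z_n exp (−nλ(β))`. -/
def W (β : ℝ) (n : ℕ) (h : H) : ℝ := Real.exp (-(n : ℝ) * M.lam β) * M.Z β n h

/-- the polymer measure `μ_n`, with density `Z_n⁻¹ exp (β H_n)` with respect to `P`. -/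
def polymer (β : ℝ) (n : ℕ) (h : H) : Measure (ℕ → Fin d → ℤ) :=
  (ENNReal.ofReal (M.Z β n h))⁻¹ •
    M.P.withDensity (fun ω => ENNReal.ofReal (Real.exp (β * M.energy n ω h)))

/-- weak disorder: the martingale limit `W_∞` is `Q`-a.s. (strictly) positive. -/
def weakDisorder (β : ℝ) : Prop :=
  ∃ Winf : H → ℝ, (∀ᵐ h ∂M.Q, Tendsto (fun n => M.W β n h) atTop (nhds (Winf h))) ∧
    (∀ᵐ h ∂M.Q, 0 < Winf h)

/-- strong disorder: `W_n → 0` `Q`-a.s. -/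
def strongDisorder (β : ℝ) : Prop :=
  ∀ᵐ h ∂M.Q, Tendsto (fun n => M.W β n h) atTop (nhds 0)

end PolymerModel

/-- the σ-field `𝔽_n` on path space generated by `ω_1, …, ω_n`. -/
def pathσ (d n : ℕ) : MeasurableSpace (ℕ → Fin d → ℤ) :=
  MeasurableSpace.comap (fun ω => fun i : Fin n => ω (i.1 + 1)) inferInstance

/-- the σ-field `𝔽_∞ = ⋁_n 𝔽_n` on path space. -/
def pathσ' (d : ℕ) : MeasurableSpace (ℕ → Fin d → ℤ) := ⨆ n, pathσ d n

namespace PolymerModel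

variable {d : ℕ} {H : Type*} [MeasurableSpace H] (M : PolymerModel d H)


section AuxLemmas

open scoped ENNReal

variable {d : ℕ} {H : Type*} [MeasurableSpace H]

lemma aux_lintegral_prod_indep {Ω ι : Type*} [MeasurableSpace Ω] {μ : Measure Ω}
    {f : ι → Ω → ℝ} (hindep : iIndepFun f μ)
    (hf : ∀ i, Measurable (f i)) (g : ι → ℝ → ℝ≥0∞) (hg : ∀ i, Measurable (g i))
    (S : Finset ι) :
    ∫⁻ ω, ∏ i ∈ S, g i (f i ω) ∂μ = ∏ i ∈ S, ∫⁻ ω, g i (f i ω) ∂μ := by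
  classical
  haveI : IsProbabilityMeasure μ := hindep.isProbabilityMeasure
  induction S using Finset.cons_induction with
  | empty => simp
  | cons i S hi ih =>
    simp only [Finset.prod_cons]
    rw [← ih]
    have hIF : IndepFun (fun ω (j : ({i} : Finset ι)) => f j ω)
        (fun ω (j : S) => f j ω) μ :=
      hindep.indepFun_finset {i} S (by simpa using hi) hf
    have hcomp : IndepFun (fun ω => g i (f i ω)) (fun ω => ∏ j ∈ S, g j (f j ω)) μ := by
      have h2 := hIF.comp
        (φ := fun v : (({i} : Finset ι) → ℝ) => g i (v ⟨i, Finset.mem_singleton_self i⟩))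
        (ψ := fun v : (S → ℝ) => ∏ j ∈ S.attach, g j (v j))
        ((hg i).comp (measurable_pi_apply _))
        (Finset.measurable_prod _ (fun j _ => (hg j).comp (measurable_pi_apply _)))
      have e2 : ((fun v : (S → ℝ) => ∏ j ∈ S.attach, g j (v j)) ∘ fun ω (j : S) => f j ω)
          = fun ω => ∏ j ∈ S, g j (f j ω) := by
        funext ω
        exact Finset.prod_attach S fun j => g j (f j ω)
      rw [← e2]
      exact h2
    have := lintegral_mul_eq_lintegral_mul_lintegral_of_indepFun
      (μ := μ) (f := fun ω => g i (f i ω)) (g := fun ω => ∏ j ∈ S, g j (f j ω))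
      ((hg i).comp (hf i)) (Finset.measurable_prod _ (fun j _ => (hg j).comp (hf j))) hcomp
    simpa using this

/-- if a positive sequence tends to a positive limit, its infimum is positive -/
lemma aux_pos_iInf {u : ℕ → ℝ} {L : ℝ} (hu : ∀ k, 0 < u k)
    (hL : 0 < L) (htend : Tendsto u atTop (nhds L)) : 0 < ⨅ k, u k := by
  obtain ⟨K, hK⟩ := (htend.eventually (eventually_gt_nhds (half_lt_self hL))).exists_forall_of_atTop
  set b : ℝ := min (L / 2) (((Finset.range (K + 1)).inf' (by simp) u)) with hb
  have hbpos : 0 < b := by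
    apply lt_min (by linarith)
    exact (Finset.lt_inf'_iff _).2 fun j _ => hu j
  have hble : ∀ k, b ≤ u k := by
    intro k
    rcases le_or_gt K k with h | h
    · exact le_trans (min_le_left _ _) (hK k h).le
    · exact le_trans (min_le_right _ _)
        (Finset.inf'_le u (Finset.mem_range.2 (by omega)))
  exact lt_of_lt_of_le hbpos (le_ciInf hble)

lemma aux_pathσ'_le : pathσ' d ≤ (inferInstance : MeasurableSpace (ℕ → Fin d → ℤ)) := by
  apply iSup_le
  intro n
  intro s hs
  obtain ⟨t, ht, rfl⟩ := hs
  exact (measurable_pi_lambda _ fun i => measurable_pi_apply _) ht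

variable (M : PolymerModel d H) (β : ℝ)

lemma aux_meas_energy (k : ℕ) :
    Measurable (fun p : H × (ℕ → Fin d → ℤ) => M.energy k p.2 p.1) := by
  unfold PolymerModel.energy
  apply Finset.measurable_sum
  intro t _
  have h1 : Measurable (fun q : H × (Fin d → ℤ) => M.η t q.2 q.1) :=
    measurable_from_prod_countable_left fun x => M.hη_meas t x
  exact h1.comp (measurable_fst.prodMk ((measurable_pi_apply t).comp measurable_snd))

lemma aux_meas_F (k : ℕ) :
    Measurable (fun p : H × (ℕ → Fin d → ℤ) => Real.exp (β * M.energy k p.2 p.1)) :=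
  (measurable_const.mul (aux_meas_energy M k)).exp

lemma aux_meas_Z (k : ℕ) : Measurable (M.Z β k) := by
  haveI := M.hPprob
  exact ((aux_meas_F M β k).stronglyMeasurable.integral_prod_right' (ν := M.P)).measurable

lemma aux_meas_W (k : ℕ) : Measurable (M.W β k) :=
  (aux_meas_Z M β k).const_mul _

/-- `P`-a.s., the walk stays within distance `t` of the origin at time `t`. -/
lemma aux_walk : ∀ᵐ ω ∂M.P, ∀ t : ℕ, ∀ i : Fin d, |ω t i| ≤ (t : ℤ) := by
  classical
  haveI := M.hPprob
  set e : Fin d × Bool → (Fin d → ℤ) :=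
    fun q j => if j = q.1 then (if q.2 then 1 else -1) else 0 with he
  have he_sum : ∀ q, (∑ i, |e q i|) = 1 := by
    rintro ⟨qi, qb⟩
    rw [Finset.sum_eq_single qi]
    · cases qb <;> simp [he]
    · intro j _ hj; simp [he, hj]
    · simp
  have he_abs : ∀ q i, |e q i| ≤ 1 := by
    rintro ⟨qi, qb⟩ i
    cases qb <;> by_cases h : i = qi <;> simp [he, h]
  have he_inj : Function.Injective e := by
    intro q q' hqq'
    obtain ⟨qi, qb⟩ := q
    obtain ⟨qi', qb'⟩ := q'
    have h1 := congrFun hqq' qi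
    simp only [he, if_pos rfl] at h1
    by_cases h : qi = qi'
    · subst h
      rw [if_pos rfl] at h1
      cases qb <;> cases qb' <;> simp_all <;> omega
    · rw [if_neg (fun hc => h hc)] at h1
      cases qb <;> simp at h1
  set U : Finset (Fin d → ℤ) := Finset.univ.image e with hU
  have hmeas_incr : ∀ t : ℕ, Measurable fun ω : ℕ → Fin d → ℤ => ω (t + 1) - ω t := by
    intro t
    apply measurable_pi_lambda
    intro i
    have h1 : Measurable fun ω : ℕ → Fin d → ℤ => ω (t+1) i :=
      (measurable_pi_apply i).comp (measurable_pi_apply (t+1))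
    have h2 : Measurable fun ω : ℕ → Fin d → ℤ => ω t i :=
      (measurable_pi_apply i).comp (measurable_pi_apply t)
    exact h1.sub h2
  have hstep : ∀ t : ℕ, ∀ᵐ ω ∂M.P, (ω (t + 1) - ω t) ∈ U := by
    intro t
    have hunion : {ω : ℕ → Fin d → ℤ | (ω (t+1) - ω t) ∈ U}
        = ⋃ v ∈ U, {ω | ω (t+1) - ω t = v} := by
      ext ω; simp [Set.mem_iUnion]
    have hmeasv : ∀ v : Fin d → ℤ, MeasurableSet {ω : ℕ → Fin d → ℤ | ω (t+1) - ω t = v} :=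
      fun v => hmeas_incr t (measurableSet_singleton v)
    have hsum : M.P {ω | (ω (t+1) - ω t) ∈ U} = ∑ v ∈ U, M.P {ω | ω (t+1) - ω t = v} := by
      rw [hunion]
      apply measure_biUnion_finset
      · intro v _ v' _ hvv'
        apply Set.disjoint_left.2
        intro ω hω hω'
        exact hvv' (hω.symm.trans hω')
      · exact fun v _ => hmeasv v
    have hval : ∀ v ∈ U, M.P {ω | ω (t+1) - ω t = v} = 1 / (2 * d) := by
      intro v hv
      obtain ⟨q, _, rfl⟩ := Finset.mem_image.1 hv
      exact M.hP_step t (e q) (he_sum q)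
    have hcard : U.card = d * 2 := by
      rw [hU, Finset.card_image_of_injective _ he_inj, Finset.card_univ]
      simp
    have htotal : M.P {ω | (ω (t+1) - ω t) ∈ U} = 1 := by
      rw [hsum, Finset.sum_congr rfl hval, Finset.sum_const, hcard, nsmul_eq_mul]
      have hd1 := M.hd
      have hd0 : (d : ℝ≥0∞) ≠ 0 := by
        simp only [ne_eq, Nat.cast_eq_zero]
        omega
      rw [one_div, Nat.cast_mul, mul_comm (2 : ℝ≥0∞) (d : ℝ≥0∞)]
      push_cast
      exact ENNReal.mul_inv_cancel (mul_ne_zero hd0 (by norm_num))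
        (ENNReal.mul_ne_top (ENNReal.natCast_ne_top d) (by norm_num))
    have hm : MeasurableSet {ω : ℕ → Fin d → ℤ | (ω (t+1) - ω t) ∈ U} := by
      rw [hunion]
      exact U.measurableSet_biUnion fun v _ => hmeasv v
    rw [ae_iff]
    exact (prob_compl_eq_zero_iff hm).2 htotal
  have h0 : ∀ᵐ ω ∂M.P, ω 0 = 0 := by
    rw [ae_iff]
    apply (prob_compl_eq_zero_iff ?_).2 M.hP0
    exact (measurable_pi_apply 0) (measurableSet_singleton 0)
  filter_upwards [ae_all_iff.2 hstep, h0] with ω hω hω0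
  intro t i
  induction t with
  | zero => simp [hω0]
  | succ t iht =>
    obtain ⟨q, _, hq⟩ := Finset.mem_image.1 (hω t)
    have hstep_i : |(ω (t+1) - ω t) i| ≤ 1 := by rw [← hq]; exact he_abs q i
    have heq : ω (t+1) i = ω t i + (ω (t+1) - ω t) i := by
      simp [Pi.sub_apply]
    rw [heq]
    calc |ω t i + (ω (t+1) - ω t) i| ≤ |ω t i| + |(ω (t+1) - ω t) i| := abs_add_le _ _
      _ ≤ (t : ℤ) + 1 := add_le_add iht hstep_i
      _ = ((t + 1 : ℕ) : ℤ) := by push_cast; ring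

/-- the deterministic bound on the energy -/
def auxC (k : ℕ) (h : H) : ℝ :=
  |β| * ∑ t ∈ Finset.Icc 1 k,
    ∑ x ∈ Fintype.piFinset (fun _ : Fin d => Finset.Icc (-(k : ℤ)) (k : ℤ)), |M.η t x h|

lemma aux_energy_bound (k : ℕ) (h : H) :
    ∀ᵐ ω ∂M.P, |β * M.energy k ω h| ≤ auxC M β k h := by
  filter_upwards [aux_walk M] with ω hω
  have hmem : ∀ t ∈ Finset.Icc 1 k,
      ω t ∈ Fintype.piFinset (fun _ : Fin d => Finset.Icc (-(k : ℤ)) (k : ℤ)) := by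
    intro t ht
    rw [Fintype.mem_piFinset]
    intro i
    rw [Finset.mem_Icc, ← abs_le]
    exact le_trans (hω t i) (by exact_mod_cast (Finset.mem_Icc.1 ht).2)
  have h1 : |M.energy k ω h| ≤ ∑ t ∈ Finset.Icc 1 k,
      ∑ x ∈ Fintype.piFinset (fun _ : Fin d => Finset.Icc (-(k : ℤ)) (k : ℤ)), |M.η t x h| := by
    refine le_trans (Finset.abs_sum_le_sum_abs _ _) (Finset.sum_le_sum ?_)
    intro t ht
    exact Finset.single_le_sum (fun x _ => abs_nonneg (M.η t x h)) (hmem t ht)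
  rw [abs_mul]
  unfold auxC
  exact mul_le_mul_of_nonneg_left h1 (abs_nonneg β)

lemma aux_integrable (k : ℕ) (h : H) :
    Integrable (fun ω => Real.exp (β * M.energy k ω h)) M.P := by
  haveI := M.hPprob
  apply Integrable.mono' (integrable_const (Real.exp (auxC M β k h)))
  · exact ((aux_meas_F M β k).comp measurable_prodMk_left).aestronglyMeasurable
  · filter_upwards [aux_energy_bound M β k h] with ω hω
    rw [Real.norm_eq_abs, abs_of_pos (Real.exp_pos _)]
    exact Real.exp_le_exp.2 (le_trans (le_abs_self _) hω)

lemma aux_Z_pos (k : ℕ) (h : H) : 0 < M.Z β k h := by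
  haveI := M.hPprob
  have hae : (fun _ : ℕ → Fin d → ℤ => Real.exp (-auxC M β k h))
      ≤ᵐ[M.P] fun ω => Real.exp (β * M.energy k ω h) := by
    filter_upwards [aux_energy_bound M β k h] with ω hω
    exact Real.exp_le_exp.2 ((abs_le.1 hω).1.trans_eq' (by ring))
  have hmono := integral_mono_ae (integrable_const (Real.exp (-auxC M β k h)))
    (aux_integrable M β k h) hae
  have hb : Real.exp (-auxC M β k h) ≤ M.Z β k h := by
    show _ ≤ ∫ ω, Real.exp (β * M.energy k ω h) ∂M.P
    simpa using hmono
  exact lt_of_lt_of_le (Real.exp_pos _) hb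

lemma aux_W_pos (k : ℕ) (h : H) : 0 < M.W β k h :=
  mul_pos (Real.exp_pos _) (aux_Z_pos M β k h)

lemma aux_lint_full (k : ℕ) (h : H) :
    ∫⁻ ω, ENNReal.ofReal (Real.exp (β * M.energy k ω h)) ∂M.P = ENNReal.ofReal (M.Z β k h) :=
  (ofReal_integral_eq_lintegral_ofReal (aux_integrable M β k h)
    (ae_of_all _ fun ω => (Real.exp_pos _).le)).symm

lemma aux_env (k : ℕ) (ω : ℕ → Fin d → ℤ) :
    ∫⁻ h, ENNReal.ofReal (Real.exp (β * M.energy k ω h)) ∂M.Q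
      = ENNReal.ofReal (Real.exp ((k : ℝ) * M.lam β)) := by
  classical
  haveI := M.hQprob
  have hgm : Measurable fun y : ℝ => ENNReal.ofReal (Real.exp (β * y)) :=
    (measurable_const.mul measurable_id).exp.ennreal_ofReal
  have h1 : ∀ h : H, ENNReal.ofReal (Real.exp (β * M.energy k ω h))
      = ∏ t ∈ Finset.Icc 1 k, ENNReal.ofReal (Real.exp (β * M.η t (ω t) h)) := by
    intro h
    rw [PolymerModel.energy, Finset.mul_sum, Real.exp_sum,
      ENNReal.ofReal_prod_of_nonneg (fun _ _ => (Real.exp_pos _).le)]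
  simp_rw [h1]
  have hinj : ∀ x ∈ Finset.Icc 1 k, ∀ y ∈ Finset.Icc 1 k,
      (fun t => (t, ω t)) x = (fun t => (t, ω t)) y → x = y :=
    fun x _ y _ hxy => (Prod.ext_iff.1 hxy).1
  have h2 : ∀ h : H, ∏ t ∈ Finset.Icc 1 k, ENNReal.ofReal (Real.exp (β * M.η t (ω t) h))
      = ∏ p ∈ (Finset.Icc 1 k).image (fun t => (t, ω t)),
          ENNReal.ofReal (Real.exp (β * M.η p.1 p.2 h)) :=
    fun h => (Finset.prod_image
      (f := fun p : ℕ × (Fin d → ℤ) => ENNReal.ofReal (Real.exp (β * M.η p.1 p.2 h)))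
      hinj).symm
  simp_rw [h2]
  rw [aux_lintegral_prod_indep M.hη_indep (fun p => M.hη_meas p.1 p.2)
    (fun _ y => ENNReal.ofReal (Real.exp (β * y))) (fun _ => hgm)]
  have h3 : ∀ p : ℕ × (Fin d → ℤ),
      ∫⁻ h, ENNReal.ofReal (Real.exp (β * M.η p.1 p.2 h)) ∂M.Q
        = ENNReal.ofReal (Real.exp (M.lam β)) := by
    intro p
    rw [← lintegral_map hgm (M.hη_meas p.1 p.2), M.hη_ident p.1 p.2,
      lintegral_map hgm (M.hη_meas 1 0),
      ← ofReal_integral_eq_lintegral_ofReal (M.hη_exp β)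
        (ae_of_all _ fun h => (Real.exp_pos _).le)]
    congr 1
    exact (Real.exp_log (integral_exp_pos (M.hη_exp β))).symm
  rw [Finset.prod_congr rfl (fun p _ => h3 p), Finset.prod_const,
    Finset.card_image_of_injOn hinj, Nat.card_Icc,
    ← ENNReal.ofReal_pow (Real.exp_pos _).le, ← Real.exp_nat_mul]
  norm_num

lemma aux_tonelli (k : ℕ) (s : Set (ℕ → Fin d → ℤ)) (hs : MeasurableSet s) :
    ∫⁻ h, M.P.withDensity (fun ω => ENNReal.ofReal (Real.exp (β * M.energy k ω h))) s ∂M.Q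
      = ENNReal.ofReal (Real.exp ((k : ℝ) * M.lam β)) * M.P s := by
  haveI := M.hQprob
  haveI := M.hPprob
  simp_rw [withDensity_apply _ hs]
  rw [lintegral_lintegral_swap]
  · rw [lintegral_congr (fun ω => aux_env M β k ω), setLIntegral_const]
  · exact ((aux_meas_F M β k).ennreal_ofReal.aemeasurable)

lemma aux_meas_L (k : ℕ) (s : Set (ℕ → Fin d → ℤ)) (hs : MeasurableSet s) :
    Measurable (fun h =>
      M.P.withDensity (fun ω => ENNReal.ofReal (Real.exp (β * M.energy k ω h))) s) := by
  haveI := M.hPprob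
  simp_rw [withDensity_apply _ hs, ← lintegral_indicator hs]
  apply Measurable.lintegral_prod_right
    (f := fun h ω => s.indicator (fun ω' => ENNReal.ofReal (Real.exp (β * M.energy k ω' h))) ω)
  have heq : Function.uncurry
      (fun h ω => s.indicator (fun ω' => ENNReal.ofReal (Real.exp (β * M.energy k ω' h))) ω)
      = Set.indicator ((Set.univ : Set H) ×ˢ s)
          (fun p => ENNReal.ofReal (Real.exp (β * M.energy k p.2 p.1))) := by
    funext p
    by_cases hp : p.2 ∈ s <;>
      simp [Function.uncurry, Set.indicator_apply, hp, Set.mem_prod]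
  rw [heq]
  exact ((aux_meas_F M β k).ennreal_ofReal).indicator (MeasurableSet.univ.prod hs)

lemma aux_polymer_eq (k : ℕ) (h : H) (s : Set (ℕ → Fin d → ℤ)) :
    M.polymer β k h s = (ENNReal.ofReal (M.Z β k h))⁻¹ *
      M.P.withDensity (fun ω => ENNReal.ofReal (Real.exp (β * M.energy k ω h))) s := by
  rw [PolymerModel.polymer, Measure.smul_apply, smul_eq_mul]

lemma aux_meas_polymer (k : ℕ) (s : Set (ℕ → Fin d → ℤ)) (hs : MeasurableSet s) :
    Measurable fun h => (M.polymer β k h s).toReal := by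
  simp_rw [aux_polymer_eq M β k _ s]
  exact (((aux_meas_Z M β k).ennreal_ofReal.inv.mul (aux_meas_L M β k s hs))).ennreal_toReal

lemma aux_L_le (k : ℕ) (h : H) (s : Set (ℕ → Fin d → ℤ)) (hs : MeasurableSet s) :
    M.P.withDensity (fun ω => ENNReal.ofReal (Real.exp (β * M.energy k ω h))) s
      ≤ ENNReal.ofReal (M.Z β k h) := by
  rw [withDensity_apply _ hs, ← aux_lint_full M β k h]
  exact setLIntegral_le_lintegral _ _

lemma aux_polymer_toReal (k : ℕ) (h : H) (s : Set (ℕ → Fin d → ℤ)) :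
    (M.polymer β k h s).toReal = (M.Z β k h)⁻¹ *
      (M.P.withDensity (fun ω => ENNReal.ofReal (Real.exp (β * M.energy k ω h))) s).toReal := by
  rw [aux_polymer_eq M β k h s, ENNReal.toReal_mul, ENNReal.toReal_inv,
    ENNReal.toReal_ofReal (aux_Z_pos M β k h).le]

lemma aux_polymer_le_one (k : ℕ) (h : H) (s : Set (ℕ → Fin d → ℤ)) (hs : MeasurableSet s) :
    (M.polymer β k h s).toReal ≤ 1 := by
  have hZ := aux_Z_pos M β k h
  rw [aux_polymer_toReal M β k h s]
  have hL : (M.P.withDensity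
      (fun ω => ENNReal.ofReal (Real.exp (β * M.energy k ω h))) s).toReal ≤ M.Z β k h :=
    ENNReal.toReal_le_of_le_ofReal hZ.le (aux_L_le M β k h s hs)
  calc (M.Z β k h)⁻¹ *
      (M.P.withDensity (fun ω => ENNReal.ofReal (Real.exp (β * M.energy k ω h))) s).toReal
      ≤ (M.Z β k h)⁻¹ * M.Z β k h := by
        exact mul_le_mul_of_nonneg_left hL (inv_nonneg.2 hZ.le)
    _ = 1 := inv_mul_cancel₀ hZ.ne'

lemma aux_claimA (δ : ℝ) (hδ : 0 < δ) (k : ℕ) (s : Set (ℕ → Fin d → ℤ))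
    (hs : MeasurableSet s) :
    ∫ h, (M.polymer β k h s).toReal ∂M.Q
      ≤ (M.Q {h | ⨅ j, M.W β j h < δ}).toReal + (M.P s).toReal / δ := by
  haveI := M.hQprob
  haveI := M.hPprob
  set T : Set H := {h | M.W β k h < δ} with hTdef
  have hT : MeasurableSet T := measurableSet_lt (aux_meas_W M β k) measurable_const
  set Lf : H → ℝ≥0∞ := fun h =>
    M.P.withDensity (fun ω => ENNReal.ofReal (Real.exp (β * M.energy k ω h))) s with hLfdef
  have hLint : ∫⁻ h, Lf h ∂M.Q = ENNReal.ofReal (Real.exp ((k : ℝ) * M.lam β)) * M.P s :=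
    aux_tonelli M β k s hs
  have hLint' : ∫⁻ h, Lf h ∂M.Q ≠ ⊤ := by
    rw [hLint]
    exact ENNReal.mul_ne_top ENNReal.ofReal_ne_top (measure_ne_top _ _)
  have hLmeas : Measurable Lf := aux_meas_L M β k s hs
  have hpt : ∀ h, (M.polymer β k h s).toReal
      ≤ T.indicator (fun _ => (1 : ℝ)) h
        + Real.exp (-(k : ℝ) * M.lam β) * (Lf h).toReal / δ := by
    intro h
    by_cases hW : M.W β k h < δ
    · rw [Set.indicator_of_mem (show h ∈ T from hW)]
      have h2 : 0 ≤ Real.exp (-(k : ℝ) * M.lam β) * (Lf h).toReal / δ := by positivity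
      linarith [aux_polymer_le_one M β k h s hs]
    · rw [Set.indicator_of_notMem (show h ∉ T from hW), aux_polymer_toReal M β k h s, zero_add]
      push_neg at hW
      have hZ := aux_Z_pos M β k h
      have hZinv : (M.Z β k h)⁻¹ ≤ Real.exp (-(k : ℝ) * M.lam β) / δ := by
        rw [le_div_iff₀ hδ]
        have hWZ : M.W β k h = Real.exp (-(k : ℝ) * M.lam β) * M.Z β k h := rfl
        calc (M.Z β k h)⁻¹ * δ
            ≤ (M.Z β k h)⁻¹ * (Real.exp (-(k : ℝ) * M.lam β) * M.Z β k h) := by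
              exact mul_le_mul_of_nonneg_left (hWZ ▸ hW) (inv_nonneg.2 hZ.le)
          _ = Real.exp (-(k : ℝ) * M.lam β) := by field_simp
      calc (M.Z β k h)⁻¹ * (Lf h).toReal
          ≤ (Real.exp (-(k : ℝ) * M.lam β) / δ) * (Lf h).toReal :=
            mul_le_mul_of_nonneg_right hZinv ENNReal.toReal_nonneg
        _ = Real.exp (-(k : ℝ) * M.lam β) * (Lf h).toReal / δ := by ring
  have hint2 : Integrable (fun h => (Lf h).toReal) M.Q :=
    integrable_toReal_of_lintegral_ne_top hLmeas.aemeasurable hLint'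
  have hintInd : Integrable (T.indicator (fun _ => (1 : ℝ))) M.Q :=
    (integrable_const (1 : ℝ)).indicator hT
  have hint3 : Integrable
      (fun h => Real.exp (-(k : ℝ) * M.lam β) * (Lf h).toReal / δ) M.Q := by
    simp_rw [mul_div_assoc, div_eq_mul_inv]
    exact (hint2.mul_const _).const_mul _
  have hmain := integral_mono_of_nonneg (ae_of_all _ fun h => ENNReal.toReal_nonneg)
    (hintInd.add hint3) (ae_of_all _ hpt)
  simp only [Pi.add_apply] at hmain
  rw [integral_add hintInd hint3] at hmain
  have hInd : ∫ h, T.indicator (fun _ => (1 : ℝ)) h ∂M.Q = (M.Q T).toReal := by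
    rw [integral_indicator_const (1 : ℝ) hT, smul_eq_mul, mul_one]
    rfl
  have hLreal : ∫ h, (Lf h).toReal ∂M.Q = Real.exp ((k : ℝ) * M.lam β) * (M.P s).toReal := by
    rw [integral_toReal hLmeas.aemeasurable (ae_lt_top hLmeas hLint'), hLint,
      ENNReal.toReal_mul, ENNReal.toReal_ofReal (Real.exp_pos _).le]
  have hsecond : ∫ h, Real.exp (-(k : ℝ) * M.lam β) * (Lf h).toReal / δ ∂M.Q
      = (M.P s).toReal / δ := by
    rw [integral_div, integral_const_mul, hLreal, ← mul_assoc, ← Real.exp_add]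
    norm_num
  rw [hInd, hsecond] at hmain
  have hsub : T ⊆ {h | ⨅ j, M.W β j h < δ} := by
    intro h hh
    have hbdd : BddBelow (Set.range fun j => M.W β j h) := by
      refine ⟨0, ?_⟩
      rintro x ⟨j, rfl⟩
      exact (aux_W_pos M β j h).le
    exact lt_of_le_of_lt (ciInf_le hbdd k) hh
  have hmono : (M.Q T).toReal ≤ (M.Q {h | ⨅ j, M.W β j h < δ}).toReal :=
    ENNReal.toReal_mono (measure_ne_top _ _) (measure_mono hsub)
  linarith

lemma aux_delta (hWD : M.weakDisorder β) :
    ∀ ε : ℝ, 0 < ε → ∃ δ : ℝ, 0 < δ ∧ (M.Q {h | ⨅ j, M.W β j h < δ}).toReal < ε := by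
  haveI := M.hQprob
  intro ε hε
  obtain ⟨Winf, htend, hpos⟩ := hWD
  have hmeasinf : Measurable fun h => ⨅ j, M.W β j h :=
    Measurable.iInf fun j => aux_meas_W M β j
  have hae : ∀ᵐ h ∂M.Q, 0 < ⨅ j, M.W β j h := by
    filter_upwards [htend, hpos] with h h1 h2
    exact aux_pos_iInf (fun k => aux_W_pos M β k h) h2 h1
  set B : ℕ → Set H := fun j => {h | ⨅ i, M.W β i h < 1 / ((j : ℝ) + 1)} with hB
  have hBmeas : ∀ j, MeasurableSet (B j) := fun j => measurableSet_lt hmeasinf measurable_const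
  have hanti : Antitone B := by
    intro j j' hjj' h hh
    have hh' : ⨅ i, M.W β i h < 1 / ((j' : ℝ) + 1) := hh
    show ⨅ i, M.W β i h < 1 / ((j : ℝ) + 1)
    refine lt_of_lt_of_le hh' ?_
    apply one_div_le_one_div_of_le (by positivity)
    exact_mod_cast add_le_add_left (Nat.cast_le.2 hjj') 1
  have hsubset : (⋂ j, B j) ⊆ {h | ¬ (0 < ⨅ i, M.W β i h)} := by
    intro h hh
    simp only [Set.mem_iInter, hB, Set.mem_setOf_eq] at hh
    intro hcon
    obtain ⟨j, hj⟩ := exists_nat_one_div_lt hcon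
    exact absurd (hh j) (not_lt.2 hj.le)
  have hzero : M.Q (⋂ j, B j) = 0 := measure_mono_null hsubset (ae_iff.1 hae)
  have htendm := tendsto_measure_iInter_atTop
    (fun j => (hBmeas j).nullMeasurableSet) hanti ⟨0, measure_ne_top M.Q (B 0)⟩
  rw [hzero] at htendm
  have hofr : (0 : ℝ≥0∞) < ENNReal.ofReal ε := ENNReal.ofReal_pos.2 hε
  obtain ⟨j, hj⟩ := (htendm.eventually_lt_const hofr).exists
  refine ⟨1 / ((j : ℝ) + 1), by positivity, ?_⟩
  exact (ENNReal.lt_ofReal_iff_toReal_lt (measure_ne_top _ _)).1 hj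

end AuxLemmas

/-- Assume weak disorder. If `A_{m,n} ∈ 𝔽_∞` satisfy `lim_m sup_n P(A_{m,n}) = 0`,
then `lim_m sup_n Q[μ_n(A_{m,n})] = 0` and `lim_m sup_n Q[μ_∞(A_{m,n})] = 0`, where
`μ_∞(A) = lim_n μ_n(A)` (a limit which exists `Q`-a.s. for each fixed event). -/
theorem sup_annealed_polymer_tendsto_zero (β : ℝ) (hWD : M.weakDisorder β)
    (A : ℕ → ℕ → Set (ℕ → Fin d → ℤ))
    (hA : ∀ m n, MeasurableSet[pathσ' d] (A m n))
    (hPA : Tendsto (fun m => ⨆ n, M.P (A m n)) atTop (nhds 0))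
    (μinf : ℕ → ℕ → H → ℝ)
    (hμinf : ∀ m n, ∀ᵐ h ∂M.Q,
      Tendsto (fun k => (M.polymer β k h (A m n)).toReal) atTop (nhds (μinf m n h))) :
    Tendsto (fun m => ⨆ n, ∫ h, (M.polymer β n h (A m n)).toReal ∂M.Q) atTop (nhds 0) ∧
    Tendsto (fun m => ⨆ n, ∫ h, μinf m n h ∂M.Q) atTop (nhds 0) := by
  classical
  haveI := M.hQprob
  haveI := M.hPprob
  have hAmeas : ∀ m n, MeasurableSet (A m n) := fun m n => aux_pathσ'_le _ (hA m n)
  have key : ∀ (I : ℕ → ℕ → ℝ), (∀ m n, 0 ≤ I m n) →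
      (∀ δ : ℝ, 0 < δ → ∀ m n, I m n ≤ (M.Q {h | ⨅ j, M.W β j h < δ}).toReal
        + (M.P (A m n)).toReal / δ) →
      Tendsto (fun m => ⨆ n, I m n) atTop (nhds 0) := by
    intro I h0 hb
    rw [Metric.tendsto_atTop]
    intro ε hε
    obtain ⟨δ, hδ, hg⟩ := aux_delta M β hWD (ε / 2) (by linarith)
    have hofr := ENNReal.ofReal_pos.2 (show (0 : ℝ) < δ * (ε / 4) by positivity)
    obtain ⟨Mo, hMo⟩ := (hPA.eventually_lt_const hofr).exists_forall_of_atTop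
    refine ⟨Mo, fun m hm => ?_⟩
    rw [Real.dist_eq, sub_zero, abs_of_nonneg (Real.iSup_nonneg fun n => h0 m n)]
    have hsup : (⨆ n, I m n) ≤ ε / 2 + ε / 4 := by
      apply ciSup_le
      intro n
      have h2 : M.P (A m n) < ENNReal.ofReal (δ * (ε / 4)) :=
        lt_of_le_of_lt (le_iSup (fun n' => M.P (A m n')) n) (hMo m hm)
      have h3 : (M.P (A m n)).toReal < δ * (ε / 4) :=
        (ENNReal.lt_ofReal_iff_toReal_lt (measure_ne_top _ _)).1 h2
      have h4 : (M.P (A m n)).toReal / δ ≤ ε / 4 := by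
        rw [div_le_iff₀ hδ, mul_comm]
        exact h3.le
      exact le_trans (hb δ hδ m n) (add_le_add hg.le h4)
    linarith
  have hDCT : ∀ m n, Tendsto (fun k => ∫ h, (M.polymer β k h (A m n)).toReal ∂M.Q)
      atTop (nhds (∫ h, μinf m n h ∂M.Q)) := by
    intro m n
    apply tendsto_integral_of_dominated_convergence (bound := fun _ => (1 : ℝ))
    · exact fun k => (aux_meas_polymer M β k (A m n) (hAmeas m n)).aestronglyMeasurable
    · exact integrable_const 1
    · intro k
      apply ae_of_all
      intro h
      rw [Real.norm_eq_abs, abs_of_nonneg ENNReal.toReal_nonneg]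
      exact aux_polymer_le_one M β k h (A m n) (hAmeas m n)
    · exact hμinf m n
  constructor
  · apply key (fun m n => ∫ h, (M.polymer β n h (A m n)).toReal ∂M.Q)
    · exact fun m n => integral_nonneg fun h => ENNReal.toReal_nonneg
    · exact fun δ hδ m n => aux_claimA M β δ hδ n (A m n) (hAmeas m n)
  · apply key (fun m n => ∫ h, μinf m n h ∂M.Q)
    · intro m n
      exact ge_of_tendsto (hDCT m n)
        (Filter.Eventually.of_forall fun k => integral_nonneg fun h => ENNReal.toReal_nonneg)
    · intro δ hδ m n
      exact le_of_tendsto (hDCT m n)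
        (Filter.Eventually.of_forall fun k => aux_claimA M β δ hδ k (A m n) (hAmeas m n))

end PolymerModel
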